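/- arXiv:2205.03188 — 5 statements merged into one kernel-verified Lean document; each statement's English description precedes it below -/
import Mathlib

section
/- Let [σ] be a cyclic permutation of length m and [π] a cyclic permutation of length n, on disjoint sets of letters. Then the number of cyclic shuffles of [σ] and [π] is (m+n−1)·C(m+n−2, m−1). -/
open Polynomial

/-- The descent set of a list (1-based positions `i` with `l_i > l_{i+1}`). -/
def desSet (l : List ℕ) : Finset ℕ :=
  (Finset.Icc 1 (l.length - 1)).filter (fun i => l.getD i 0 < l.getD (i - 1) 0)

/-- The number of descents of a list. -/
def des (l : List ℕ) : ℕ := (desSet l).card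

/-- The major index of a list: sum of descent positions. -/
def maj (l : List ℕ) : ℕ := ∑ i ∈ desSet l, i

/-- The cyclic descent set: 1-based positions `i ∈ {1,…,n}` with `l_i > l_{i+1}`,
where `l_{n+1} = l_1`. -/
def cdesSet (l : List ℕ) : Finset ℕ :=
  (Finset.Icc 1 l.length).filter (fun i => l.getD (i % l.length) 0 < l.getD (i - 1) 0)

/-- The cyclic descent number. -/
def cdes (l : List ℕ) : ℕ := (cdesSet l).card

/-- The cyclic descent-bottom set: values `l_{i+1}` at cyclic descent positions `i`. -/
def cBd (l : List ℕ) : Finset ℕ := (cdesSet l).image (fun i => l.getD (i % l.length) 0)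

/-- `α` is a (linear) shuffle of `σ` and `π`. -/
def IsShuffle (σ π α : List ℕ) : Prop :=
  α.Nodup ∧ σ.Sublist α ∧ π.Sublist α ∧ α.length = σ.length + π.length

/-- `σ` is a circular subsequence of `α`: some rotation of `σ` is a subsequence of
some rotation of `α`. -/
def IsCyclicSubseq (σ α : List ℕ) : Prop := ∃ i j, (σ.rotate i).Sublist (α.rotate j)

/-- `α` is a cyclic shuffle of `σ` and `π` (as cyclic permutations). -/
def IsCyclicShuffle (σ π α : List ℕ) : Prop :=
  α.Nodup ∧ α.length = σ.length + π.length ∧ IsCyclicSubseq σ α ∧ IsCyclicSubseq π α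

/-- `l` is the canonical representative of its cyclic class: it starts with its
largest letter. -/
def IsRep (l : List ℕ) : Prop := l ≠ [] ∧ ∀ x ∈ l, x ≤ l.headI

/-- The rotation of `l` starting with the letter `i` (the map `S_i`). -/
def startAt (l : List ℕ) (i : ℕ) : List ℕ := l.rotate (l.idxOf i)

/-- The Gaussian binomial coefficient as a polynomial in `q = X`. -/
noncomputable def qbinom : ℕ → ℕ → Polynomial ℤ
  | _, 0 => 1
  | 0, _ + 1 => 0
  | n + 1, k + 1 => qbinom n k + X ^ (k + 1) * qbinom n (k + 1)
termination_by n k => n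

/-- The Gaussian binomial with integer lower index, `0` for negative lower index. -/
noncomputable def qbinomZ (a : ℕ) (b : ℤ) : Polynomial ℤ := if 0 ≤ b then qbinom a b.toNat else 0

/-- The binomial coefficient with integer lower index, `0` for negative lower index. -/
def chooseZ (a : ℕ) (b : ℤ) : ℕ := if 0 ≤ b then a.choose b.toNat else 0

/-!
Every cyclic class has a unique representative starting with its largest letter `M`; by symmetry
`M` lies in `σ`, and `σ` is cyclically `M :: τ`. A word `M :: β` is then a cyclic shuffle exactly
when `β` is a linear shuffle of `τ` with one of the `n` rotations of `π`. Two distinct rotations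
of `π` cannot both be sublists of one duplicate-free word, so the count is
`n * C(m - 1 + n, m - 1) = (m + n - 1) * C(m + n - 2, m - 1)`.
-/

namespace List

variable {α : Type*}

theorem IsRotated.filter {l l' : List α} (h : l ~r l') (p : α → Bool) :
    l.filter p ~r l'.filter p := by
  obtain ⟨n, hn, rfl⟩ := isRotated_iff_mod.1 h
  conv_lhs => rw [← take_append_drop n l]
  rw [rotate_eq_drop_append_take hn, filter_append, filter_append]
  exact isRotated_append

theorem IsRotated.eq_of_cons {a : α} {l₁ l₂ : List α} (h : a :: l₁ ~r a :: l₂)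
    (hn : (a :: l₂).Nodup) : l₁ = l₂ := by
  obtain ⟨k, hk⟩ := h.symm
  have hlen : 0 < (a :: l₂).length := length_pos_of_ne_nil (cons_ne_nil a l₂)
  have hmod : k % (a :: l₂).length = 0 := by
    rw [← rotate_mod] at hk
    have := congr_arg head? hk
    rw [head?_rotate (Nat.mod_lt _ hlen), head?_cons, getElem?_eq_getElem (Nat.mod_lt _ hlen),
      Option.some_inj] at this
    exact hn.getElem_inj_iff.1 (this.trans (getElem_cons_zero a l₂ hlen).symm)
  rw [hn.rotate_eq_self_iff.2 (Or.inl hmod)] at hk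
  exact (cons_injective hk).symm

variable [DecidableEq α]

theorem Sublist.filter_mem_eq {s l : List α} (h : s <+ l) (hl : l.Nodup) :
    l.filter (· ∈ s) = s := by
  induction h with
  | slnil => rfl
  | @cons s l a h ih =>
    have ha : a ∉ s := fun ha => (nodup_cons.1 hl).1 (h.subset ha)
    rw [filter_cons_of_neg (by simpa using ha), ih (nodup_cons.1 hl).2]
  | @cons_cons s l a h ih =>
    have ha : a ∉ l := (nodup_cons.1 hl).1
    rw [filter_cons_of_pos (by simp)]
    refine congrArg (a :: ·) ((filter_congr fun x hx => ?_).trans (ih (nodup_cons.1 hl).2))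
    have : x ≠ a := fun hxa => ha (hxa ▸ hx)
    simp only [mem_cons, this, false_or]

theorem Nodup.eq_of_sublist_of_perm {s₁ s₂ l : List α} (hl : l.Nodup) (h₁ : s₁ <+ l)
    (h₂ : s₂ <+ l) (hp : s₁ ~ s₂) : s₁ = s₂ := by
  rw [← h₁.filter_mem_eq hl, ← h₂.filter_mem_eq hl]
  exact filter_congr fun x _ => by simp [hp.mem_iff]

def shuffles : List α → List α → Finset (List α)
  | [], l => {l}
  | l, [] => {l}
  | a :: l₁, b :: l₂ =>
      (shuffles l₁ (b :: l₂)).image (a :: ·) ∪ (shuffles (a :: l₁) l₂).image (b :: ·)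

@[simp]
theorem shuffles_nil_left (l : List α) : shuffles [] l = {l} := by
  rw [shuffles]

@[simp]
theorem shuffles_nil_right (l : List α) : shuffles l [] = {l} := by
  rw [shuffles.eq_def]; cases l <;> rfl

theorem cons_mem_shuffles_cons_left {a : α} {β l₁ l₂ : List α} (h : β ∈ shuffles l₁ l₂) :
    a :: β ∈ shuffles (a :: l₁) l₂ := by
  cases l₂ with
  | nil => simp_all
  | cons b l₂ => rw [shuffles]; exact Finset.mem_union_left _ (Finset.mem_image_of_mem _ h)

theorem cons_mem_shuffles_cons_right {b : α} {β l₁ l₂ : List α} (h : β ∈ shuffles l₁ l₂) :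
    b :: β ∈ shuffles l₁ (b :: l₂) := by
  cases l₁ with
  | nil => simp_all
  | cons a l₁ => rw [shuffles]; exact Finset.mem_union_right _ (Finset.mem_image_of_mem _ h)

theorem sublist_perm_of_mem_shuffles {β l₁ l₂ : List α} (h : β ∈ shuffles l₁ l₂) :
    l₁ <+ β ∧ l₂ <+ β ∧ β ~ l₁ ++ l₂ := by
  induction l₁, l₂ using shuffles.induct generalizing β with
  | case1 l => simp_all
  | case2 l => simp_all
  | case3 a l₁ b l₂ ih₁ ih₂ =>
    simp only [shuffles, Finset.mem_union, Finset.mem_image] at h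
    rcases h with ⟨β, hβ, rfl⟩ | ⟨β, hβ, rfl⟩
    · obtain ⟨h₁, h₂, hp⟩ := ih₁ hβ
      exact ⟨h₁.cons_cons a, h₂.cons a, hp.cons a⟩
    · obtain ⟨h₁, h₂, hp⟩ := ih₂ hβ
      exact ⟨h₁.cons b, h₂.cons_cons b, (hp.cons b).trans perm_middle.symm⟩

theorem mem_shuffles_of_sublist {β l₁ l₂ : List α} (hβ : β.Nodup) (h₁ : l₁ <+ β)
    (h₂ : l₂ <+ β) (hp : β ~ l₁ ++ l₂) : β ∈ shuffles l₁ l₂ := by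
  induction β generalizing l₁ l₂ with
  | nil => simp [eq_nil_of_sublist_nil h₁, eq_nil_of_sublist_nil h₂]
  | cons c β ih =>
    obtain ⟨hc, hβ⟩ := nodup_cons.1 hβ
    rcases sublist_cons_iff.1 h₁ with h₁' | ⟨r₁, rfl, h₁'⟩ <;>
      rcases sublist_cons_iff.1 h₂ with h₂' | ⟨r₂, rfl, h₂'⟩
    · exact absurd (hp.subset mem_cons_self) fun h =>
        hc (mem_append.1 h |>.elim (fun h => h₁'.subset h) fun h => h₂'.subset h)
    · exact cons_mem_shuffles_cons_right (ih hβ h₁' h₂' ((hp.trans perm_middle).cons_inv))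
    · exact cons_mem_shuffles_cons_left (ih hβ h₁' h₂' hp.cons_inv)
    · simpa using hp.nodup_iff.1 (nodup_cons.2 ⟨hc, hβ⟩)

theorem card_shuffles {l₁ l₂ : List α} (h : l₁.Disjoint l₂) :
    (shuffles l₁ l₂).card = (l₁.length + l₂.length).choose l₁.length := by
  induction l₁, l₂ using shuffles.induct with
  | case1 l => simp
  | case2 l => simp
  | case3 a l₁ b l₂ ih₁ ih₂ =>
    have hab : a ≠ b := fun hab => h (mem_cons_self ..) (hab ▸ mem_cons_self ..)
    have hdisj : _root_.Disjoint ((shuffles l₁ (b :: l₂)).image (a :: ·))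
        ((shuffles (a :: l₁) l₂).image (b :: ·)) := by
      simp only [Finset.disjoint_left, Finset.mem_image]
      rintro _ ⟨β, -, rfl⟩ ⟨γ, -, hγ⟩
      exact hab (cons.inj hγ).1.symm
    rw [shuffles, Finset.card_union_of_disjoint hdisj,
      Finset.card_image_of_injective _ cons_injective,
      Finset.card_image_of_injective _ cons_injective,
      ih₁ (disjoint_of_disjoint_cons_left h), ih₂ (disjoint_of_disjoint_cons_right h)]
    simp only [length_cons]
    rw [show l₁.length + 1 + (l₂.length + 1) = l₁.length + (l₂.length + 1) + 1 by omega,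
      Nat.choose_succ_succ', show l₁.length + 1 + l₂.length = l₁.length + (l₂.length + 1) by omega]

theorem disjoint_shuffles_of_perm {l l₁ l₂ : List α} (hn : (l ++ l₁).Nodup) (hp : l₁ ~ l₂)
    (hne : l₁ ≠ l₂) : _root_.Disjoint (shuffles l l₁) (shuffles l l₂) := by
  refine Finset.disjoint_left.2 fun β h₁ h₂ => hne ?_
  obtain ⟨-, hs₁, hβ⟩ := sublist_perm_of_mem_shuffles h₁
  exact (hβ.nodup_iff.2 hn).eq_of_sublist_of_perm hs₁ (sublist_perm_of_mem_shuffles h₂).2.1 hp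

end List

open List

theorem IsCyclicSubseq.subset {σ α : List ℕ} (h : IsCyclicSubseq σ α) : σ ⊆ α := by
  obtain ⟨i, j, h⟩ := h
  exact fun a ha => mem_rotate.1 (h.subset (mem_rotate.2 ha))

theorem isCyclicSubseq_of_isRotated {σ s α : List ℕ} (h : σ ~r s) (hs : s <+ α) :
    IsCyclicSubseq σ α := by
  obtain ⟨i, rfl⟩ := h
  exact ⟨i, 0, by rwa [rotate_zero]⟩

theorem IsCyclicSubseq.filter_isRotated {σ α : List ℕ} (h : IsCyclicSubseq σ α)
    (hα : α.Nodup) : α.filter (· ∈ σ) ~r σ := by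
  obtain ⟨i, j, h⟩ := h
  have hfilter : (α.rotate j).filter (· ∈ σ) = σ.rotate i := by
    rw [← h.filter_mem_eq (nodup_rotate.2 hα)]
    exact filter_congr fun x _ => by simp only [mem_rotate]
  exact ((IsRotated.forall α j).filter _).symm.trans (hfilter ▸ IsRotated.forall σ i)

theorem IsCyclicShuffle.perm {σ π α : List ℕ} (h : IsCyclicShuffle σ π α)
    (hσπ : (σ ++ π).Nodup) : α ~ σ ++ π := by
  obtain ⟨-, hlen, hσ, hπ⟩ := h
  refine ((hσπ.subperm fun a ha => ?_).perm_of_length_le ?_).symm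
  · exact (mem_append.1 ha).elim (fun h => hσ.subset h) fun h => hπ.subset h
  · rw [hlen, length_append]

theorem isCyclicShuffle_comm {σ π α : List ℕ} :
    IsCyclicShuffle σ π α ↔ IsCyclicShuffle π σ α := by
  simp only [IsCyclicShuffle, Nat.add_comm σ.length]
  tauto

theorem IsRep.eq_cons {α : List ℕ} {M : ℕ} (h : IsRep α) (hM : M ∈ α) (hmax : ∀ x ∈ α, x ≤ M) :
    α = M :: α.tail := by
  obtain ⟨hne, hle⟩ := h
  obtain ⟨a, t, rfl⟩ := exists_cons_of_ne_nil hne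
  rw [le_antisymm (hmax a mem_cons_self) (hle M hM)]
  rfl

section Representatives

variable {σ π τ : List ℕ} {M : ℕ}

theorem isRep_cons_and_isCyclicShuffle (hσπ : (σ ++ π).Nodup) (hτ : M :: τ ~r σ)
    (hmax : ∀ x ∈ σ ++ π, x ≤ M) {ρ β : List ℕ} (hρ : ρ ~r π) (hβ : β ∈ τ.shuffles ρ) :
    IsRep (M :: β) ∧ IsCyclicShuffle σ π (M :: β) := by
  obtain ⟨hτβ, hρβ, hβp⟩ := sublist_perm_of_mem_shuffles hβ
  have hperm : M :: β ~ σ ++ π := (hβp.cons M).trans (hτ.perm.append hρ.perm)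
  refine ⟨⟨cons_ne_nil M β, fun x hx => hmax x (hperm.subset hx)⟩, hperm.nodup_iff.2 hσπ,
    by rw [hperm.length_eq, length_append], ?_, ?_⟩
  · exact isCyclicSubseq_of_isRotated hτ.symm (hτβ.cons_cons M)
  · exact isCyclicSubseq_of_isRotated hρ.symm (hρβ.cons M)

theorem exists_shuffle_of_isRep_of_isCyclicShuffle (hσπ : (σ ++ π).Nodup) (hτ : M :: τ ~r σ)
    (hmax : ∀ x ∈ σ ++ π, x ≤ M) {α : List ℕ} (hrep : IsRep α)
    (hα : IsCyclicShuffle σ π α) : ∃ ρ, ρ ~r π ∧ ∃ β ∈ τ.shuffles ρ, α = M :: β := by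
  have hMσ : M ∈ σ := hτ.mem_iff.1 mem_cons_self
  have hMπ : M ∉ π := fun h => (nodup_append.1 hσπ).2.2 M hMσ M h rfl
  have hperm := hα.perm hσπ
  set β := α.tail
  have hαβ : α = M :: β := hrep.eq_cons (hperm.mem_iff.2 (mem_append_left π hMσ))
    fun x hx => hmax x (hperm.subset hx)
  have hσf := hα.2.2.1.filter_isRotated hα.1
  have hπf := hα.2.2.2.filter_isRotated hα.1
  rw [hαβ, filter_cons_of_pos (by simpa using hMσ)] at hσf
  rw [hαβ, filter_cons_of_neg (by simpa using hMπ)] at hπf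
  have hτβ : β.filter (· ∈ σ) = τ :=
    (hσf.trans hτ.symm).eq_of_cons (hτ.nodup_iff.2 (nodup_append.1 hσπ).1)
  refine ⟨_, hπf, β, mem_shuffles_of_sublist ?_ (hτβ ▸ filter_sublist) filter_sublist ?_, hαβ⟩
  · exact (nodup_cons.1 (hαβ ▸ hα.1)).2
  · exact (hαβ ▸ hperm.trans (hτ.perm.symm.append hπf.perm.symm)).cons_inv

theorem ncard_isRep_isCyclicShuffle_of_max_mem_left (hσπ : (σ ++ π).Nodup) (hπ : π ≠ [])
    (hM : M ∈ σ) (hmax : ∀ x ∈ σ ++ π, x ≤ M) :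
    {α | IsRep α ∧ IsCyclicShuffle σ π α}.ncard
      = π.length * (σ.length - 1 + π.length).choose (σ.length - 1) := by
  obtain ⟨τ, hτ⟩ : ∃ τ, M :: τ ~r σ := by
    obtain ⟨s, t, rfl⟩ := append_of_mem hM
    exact ⟨t ++ s, isRotated_append (l := M :: t)⟩
  have hτσ : τ.length = σ.length - 1 := by simp [← hτ.perm.length_eq]
  have hτπ : (τ ++ π).Nodup := (nodup_cons.1 ((hτ.perm.append_right π).nodup_iff.2 hσπ)).2
  have hset : {α | IsRep α ∧ IsCyclicShuffle σ π α}
      = ↑((π.cyclicPermutations.toFinset.biUnion τ.shuffles).image (M :: ·)) := by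
    ext α
    simp only [Set.mem_ofPred_eq, Finset.coe_image, Finset.coe_biUnion, Set.mem_image,
      Set.mem_iUnion, Finset.mem_coe, mem_toFinset, mem_cyclicPermutations_iff]
    constructor
    · rintro ⟨hrep, hα⟩
      obtain ⟨ρ, hρ, β, hβ, rfl⟩ :=
        exists_shuffle_of_isRep_of_isCyclicShuffle hσπ hτ hmax hrep hα
      exact ⟨β, ⟨ρ, hρ, hβ⟩, rfl⟩
    · rintro ⟨β, ⟨ρ, hρ, hβ⟩, rfl⟩
      exact isRep_cons_and_isCyclicShuffle hσπ hτ hmax hρ hβ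
  have hdisj : (π.cyclicPermutations.toFinset : Set (List ℕ)).PairwiseDisjoint τ.shuffles :=
    fun ρ hρ ρ' hρ' hne => by
      simp only [Finset.mem_coe, mem_toFinset, mem_cyclicPermutations_iff] at hρ hρ'
      exact disjoint_shuffles_of_perm ((hρ.perm.append_left τ).nodup_iff.2 hτπ)
        (hρ.perm.trans hρ'.perm.symm) hne
  rw [hset, Set.ncard_coe_finset, Finset.card_image_of_injective _ cons_injective,
    Finset.card_biUnion hdisj]
  have hcard : ∀ ρ ∈ π.cyclicPermutations.toFinset,
      (τ.shuffles ρ).card = (σ.length - 1 + π.length).choose (σ.length - 1) := by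
    intro ρ hρ
    rw [mem_toFinset, mem_cyclicPermutations_iff] at hρ
    rw [card_shuffles (disjoint_of_nodup_append ((hρ.perm.append_left τ).nodup_iff.2 hτπ)),
      hρ.perm.length_eq, hτσ]
  rw [Finset.sum_congr rfl hcard, Finset.sum_const, smul_eq_mul,
    toFinset_card_of_nodup (nodup_append.1 hσπ).2.1.cyclicPermutations,
    length_cyclicPermutations_of_ne_nil π hπ]

end Representatives

theorem Nat.mul_choose_eq_add_sub_one_mul_choose {m : ℕ} (hm : 0 < m) (n : ℕ) :
    n * (m - 1 + n).choose (m - 1) = (m + n - 1) * (m + n - 2).choose (m - 1) := by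
  obtain ⟨a, rfl⟩ : ∃ a, m = a + 1 := ⟨m - 1, by omega⟩
  rcases n with _ | b
  · rcases a with _ | a <;> simp
  · have h := Nat.choose_mul_succ_eq (a + b) a
    rw [show a + b + 1 - a = b + 1 by omega] at h
    rw [show a + 1 - 1 + (b + 1) = a + b + 1 by omega,
      show a + 1 + (b + 1) - 1 = a + b + 1 by omega, show a + 1 + (b + 1) - 2 = a + b by omega,
      Nat.add_sub_cancel, mul_comm, ← h, mul_comm]

/-- The number of cyclic shuffles of disjoint cyclic permutations of lengths
`m` and `n` is `(m+n-1) * (m+n-2).choose (m-1)`. -/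
theorem cyclic_shuffle_count (m n : ℕ) (σ π : List ℕ) (hσ : σ.Nodup) (hπ : π.Nodup)
    (hσ0 : σ ≠ []) (hπ0 : π ≠ []) (hdisj : σ.Disjoint π)
    (hm : σ.length = m) (hn : π.length = n) :
    {α : List ℕ | IsRep α ∧ IsCyclicShuffle σ π α}.ncard
      = (m + n - 1) * (m + n - 2).choose (m - 1) := by
  subst hm hn
  have hσπ : (σ ++ π).Nodup := nodup_append.2 ⟨hσ, hπ, fun a ha b hb hab => hdisj ha (hab ▸ hb)⟩
  obtain ⟨M, hM, hmax⟩ := (σ ++ π).toFinset.exists_max_image id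
    ⟨_, mem_toFinset.2 (mem_append_left π (head_mem hσ0))⟩
  simp only [mem_toFinset, id] at hM hmax
  have hσpos : 0 < σ.length := length_pos_iff.2 hσ0
  have hπpos : 0 < π.length := length_pos_iff.2 hπ0
  rcases mem_append.1 hM with hMσ | hMπ
  · rw [ncard_isRep_isCyclicShuffle_of_max_mem_left hσπ hπ0 hMσ hmax,
      Nat.mul_choose_eq_add_sub_one_mul_choose hσpos]
  · simp_rw [isCyclicShuffle_comm (σ := σ)]
    rw [ncard_isRep_isCyclicShuffle_of_max_mem_left (perm_append_comm.nodup_iff.1 hσπ) hσ0 hMπ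
        fun x hx => hmax x (perm_append_comm.subset hx),
      Nat.mul_choose_eq_add_sub_one_mul_choose hπpos, Nat.add_comm π.length,
      Nat.choose_symm_of_eq_add (b := σ.length - 1) (by omega)]
end

section
/- With notation as in the bijection ψ from cyclic shuffles of [σ] and [π] to linear shuffles (where [σ], [π] are disjoint cyclic permutations and the largest letter lies in [σ]): for every cyclic shuffle [α], writing α̂' = ψ([α]), one has cdes([α]) = des(α̂') + 1 and maj([α]) = maj(α̂') + des(α̂') + 1. -/
open Polynomial

/-! A representative `α̂ = a :: α̂'` starts with its largest letter, so the wrap-around pair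
(last letter, `a`) is never a cyclic descent and `cdes α̂ = des α̂`. Since `α̂` has at least two
distinct letters, position `1` is a descent of `α̂`, and its other descents are those of `α̂'`
shifted by one; counting and summing them gives both identities. -/

theorem desSet_cons_cons_of_lt {a b : ℕ} (t : List ℕ) (h : b < a) :
    desSet (a :: b :: t) = insert 1 ((desSet (b :: t)).map (addRightEmbedding 1)) := by
  ext i
  rcases i with _ | _ | j
  · simp [desSet]
  · simp [desSet, h]
  · simp only [desSet, Finset.mem_filter, Finset.mem_Icc, Finset.mem_insert, Finset.mem_map,
      addRightEmbedding_apply, List.length_cons]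
    constructor
    · rintro ⟨hj, hlt⟩
      exact Or.inr ⟨j + 1, ⟨by omega, by simpa using hlt⟩, rfl⟩
    · rintro (h1 | ⟨k, ⟨hk, hlt⟩, hk'⟩)
      · omega
      · obtain rfl : k = j + 1 := by omega
        exact ⟨by omega, by simpa using hlt⟩

theorem des_cons_cons_of_lt {a b : ℕ} (t : List ℕ) (h : b < a) :
    des (a :: b :: t) = des (b :: t) + 1 := by
  rw [des, desSet_cons_cons_of_lt t h, Finset.card_insert_of_notMem, Finset.card_map, des]
  simp [desSet]

theorem maj_cons_cons_of_lt {a b : ℕ} (t : List ℕ) (h : b < a) :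
    maj (a :: b :: t) = maj (b :: t) + des (b :: t) + 1 := by
  rw [maj, desSet_cons_cons_of_lt t h, Finset.sum_insert, Finset.sum_map]
  · simp only [addRightEmbedding_apply, Finset.sum_add_distrib, Finset.sum_const, smul_eq_mul,
      mul_one, maj, des]
    omega
  · simp [desSet]

theorem cdesSet_eq_desSet {l : List ℕ} (hl : ∀ x ∈ l, x ≤ l.headI) : cdesSet l = desSet l := by
  ext i
  simp only [cdesSet, desSet, Finset.mem_filter, Finset.mem_Icc]
  rcases Nat.lt_or_ge i l.length with hi | hi
  · rw [Nat.mod_eq_of_lt hi]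
    exact ⟨fun ⟨⟨h1, _⟩, h⟩ => ⟨⟨h1, by omega⟩, h⟩, fun ⟨⟨h1, _⟩, h⟩ => ⟨⟨h1, by omega⟩, h⟩⟩
  · refine ⟨fun ⟨⟨h1, h2⟩, h⟩ => ?_, fun ⟨⟨_, _⟩, _⟩ => by omega⟩
    obtain rfl : i = l.length := by omega
    obtain _ | ⟨a, t⟩ := l
    · simp at h1
    have hlast := hl _ (List.getElem_mem (l := a :: t) (Nat.sub_lt h1 one_pos))
    rw [Nat.mod_self, List.getD_eq_getElem _ _ (Nat.sub_lt h1 one_pos)] at h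
    exact absurd h (not_lt.mpr hlast)

theorem cdes_eq_des {l : List ℕ} (hl : IsRep l) : cdes l = des l := by
  rw [cdes, des, cdesSet_eq_desSet hl.2]

theorem cdes_maj_of_cyclic_shuffle_general (σ π α : List ℕ)
    (hσ0 : σ ≠ []) (hπ0 : π ≠ [])
    (hα : IsRep α ∧ IsCyclicShuffle σ π α) :
    cdes α = des α.tail + 1 ∧ maj α = maj α.tail + des α.tail + 1 := by
  obtain ⟨hrep, hnodup, hlen, -⟩ := hα
  have hlen2 : 2 ≤ α.length := by
    rw [hlen]
    exact Nat.add_le_add (List.length_pos_iff.mpr hσ0) (List.length_pos_iff.mpr hπ0)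
  obtain ⟨a, b, t, rfl⟩ : ∃ a b t, α = a :: b :: t := by
    rcases α with _ | ⟨a, _ | ⟨b, t⟩⟩ <;> simp at hlen2 ⊢
  have hba : b < a := lt_of_le_of_ne (hrep.2 b (by simp)) fun hab =>
    (List.nodup_cons.mp hnodup).1 (hab ▸ List.mem_cons_self)
  exact ⟨by rw [cdes_eq_des hrep, des_cons_cons_of_lt t hba, List.tail],
    by rw [maj_cons_cons_of_lt t hba, List.tail]⟩

/-- For the representative `α` of a cyclic shuffle, `cdes([α]) = des(α̂') + 1` and
`maj([α]) = maj(α̂') + des(α̂') + 1`, where `α̂'` is `α` with the first letter removed. -/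
theorem cdes_maj_of_cyclic_shuffle (σ π α : List ℕ) (hσ : σ.Nodup) (hπ : π.Nodup)
    (hσ0 : σ ≠ []) (hπ0 : π ≠ []) (hdisj : σ.Disjoint π) (hrep : IsRep σ)
    (hmax : ∀ x ∈ π, x < σ.headI)
    (hα : IsRep α ∧ IsCyclicShuffle σ π α) :
    cdes α = des α.tail + 1 ∧ maj α = maj α.tail + des α.tail + 1 :=
  cdes_maj_of_cyclic_shuffle_general σ π α hσ0 hπ0 hα
end

section
/- For integers m, n, r, s, k with 0 ≤ r ≤ m, 0 ≤ s ≤ n, the identity (n−s)·C(m−r+s, k−r)·C(n−s+r−1, n−k+r) + s·C(m−r+s−1, k−r)·C(n−s+r, n−k+r) = (k(m−r)(n−s) + (m+n−k)rs)/((m−r+s)(n−s+r)) · C(m−r+s, k−r) · C(n−s+r, k−s) holds (whenever m−r+s > 0 and n−s+r > 0). -/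
open Polynomial

/-! With `a = m - r + s`, `b = n - s + r`, `i = k - r`, `j = k - s`, the lower index
`n - k + r` equals `b - j`, and the absorption identities `C(a-1, i) = (a-i)/a · C(a, i)` and
`C(b-1, b-j) = j/b · C(b, j)` turn both sides into multiples of `C(a, i) · C(b, j)`; what remains
is the polynomial identity `(b-r)·j·a + s·(a-i)·b = k(m-r)(n-s) + (m+n-k)rs`. -/

lemma chooseZ_natCast (a t : ℕ) : chooseZ a t = a.choose t := by
  simp [chooseZ]

lemma chooseZ_of_neg (a : ℕ) {i : ℤ} (hi : i < 0) : chooseZ a i = 0 := by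
  simp [chooseZ, not_le.mpr hi]

lemma chooseZ_symm (b : ℕ) (j : ℤ) : chooseZ b (b - j) = chooseZ b j := by
  rcases lt_or_ge j 0 with hj | hj
  · rw [chooseZ_of_neg b hj, chooseZ, if_pos (by omega), Nat.choose_eq_zero_of_lt (by omega)]
  rcases lt_or_ge (b : ℤ) j with hbj | hbj
  · rw [chooseZ_of_neg b (by omega), chooseZ, if_pos hj, Nat.choose_eq_zero_of_lt (by omega)]
  lift j to ℕ using hj
  rw [← Nat.cast_sub (by omega), chooseZ_natCast, chooseZ_natCast, Nat.choose_symm (by omega)]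

lemma natCast_mul_chooseZ_sub_one {R : Type*} [CommRing R] (a : ℕ) (i : ℤ) :
    (a : R) * chooseZ (a - 1) i = (a - i) * chooseZ a i := by
  rcases lt_or_ge i 0 with hi | hi
  · simp [chooseZ_of_neg _ hi]
  lift i to ℕ using hi
  rw [chooseZ_natCast, chooseZ_natCast]
  rcases a with _ | c
  · rcases i with _ | i <;> simp
  rcases le_or_gt i (c + 1) with hic | hic
  · have key := congrArg (Nat.cast : ℕ → R) (Nat.choose_mul_succ_eq c i)
    push_cast [Nat.cast_sub hic] at key ⊢
    linear_combination key
  · simp [Nat.choose_eq_zero_of_lt hic, Nat.choose_eq_zero_of_lt (by omega : c < i)]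

section Field

variable {K : Type*} [Field K] [CharZero K]

lemma chooseZ_sub_one_eq_div {a : ℕ} (ha : a ≠ 0) (i : ℤ) :
    (chooseZ (a - 1) i : K) = (a - i) / a * chooseZ a i := by
  rw [div_mul_eq_mul_div, eq_div_iff (by exact_mod_cast ha), mul_comm,
    natCast_mul_chooseZ_sub_one]

lemma chooseZ_sub_one_sub_eq_div {b : ℕ} (hb : b ≠ 0) (j : ℤ) :
    (chooseZ (b - 1) ((b : ℤ) - j) : K) = j / b * chooseZ b j := by
  rw [chooseZ_sub_one_eq_div hb, chooseZ_symm]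
  push_cast
  ring

end Field

/-- The binomial identity used to deduce the AGRR formula. -/
theorem binomial_identity (m n r s : ℕ) (k : ℤ) (hr : r ≤ m) (hs : s ≤ n)
    (h1 : 0 < m - r + s) (h2 : 0 < n - s + r) :
    ((n - s : ℕ) : ℚ) * chooseZ (m - r + s) (k - r) * chooseZ (n - s + r - 1) ((n : ℤ) - k + r)
      + (s : ℚ) * chooseZ (m - r + s - 1) (k - r) * chooseZ (n - s + r) ((n : ℤ) - k + r)
      = ((k : ℚ) * ((m : ℚ) - r) * ((n : ℚ) - s) + ((m : ℚ) + n - k) * r * s)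
          / ((((m : ℚ) - r) + s) * (((n : ℚ) - s) + r))
        * chooseZ (m - r + s) (k - r) * chooseZ (n - s + r) (k - s) := by
  rw [show (n : ℤ) - k + r = ((n - s + r : ℕ) : ℤ) - (k - s) by omega, chooseZ_symm,
    chooseZ_sub_one_eq_div h1.ne', chooseZ_sub_one_sub_eq_div h2.ne']
  push_cast [Nat.cast_sub hr, Nat.cast_sub hs]
  have ha : (m : ℚ) - r + s ≠ 0 := by exact_mod_cast (by omega : (m : ℤ) - r + s ≠ 0)
  have hb : (n : ℚ) - s + r ≠ 0 := by exact_mod_cast (by omega : (n : ℤ) - s + r ≠ 0)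
  field_simp
  ring
end

section
/- Setting q = 1 in Stanley's Shuffle Theorem: for disjoint permutations σ ∈ S_m, π ∈ S_n with des(σ) = r and des(π) = s, the number of shuffles α of σ and π with des(α) = k equals C(m−r+s, k−r)·C(n−s+r, k−s). -/
open Polynomial

/-!
Stanley's `P`-partition argument. Call values `f₁ ≥ ⋯ ≥ f_N` in `{0, …, p}` compatible with a
word `α` if `fᵢ > fᵢ₊₁` at every descent `αᵢ > αᵢ₊₁`; there are `C(N + p - des α, N)` of them.
A word with compatible values is the same thing as a set of (value, letter) pairs, listed with
larger values first and equal values by increasing letter. So a shuffle of `σ` and `π` with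
compatible values splits, by restriction, into `σ` and `π` with compatible values, and merging
inverts this: for every `p`,
`∑_k #{α | des α = k} · C(m + n + p - k, m + n) = C(m + p - r, m) · C(n + p - s, n)`.
Expanding the right-hand side in the same form, with coefficients
`C(m - r + s, k - r) · C(n - s + r, k - s)`, is a binomial identity proved by Pascal recursions,
and such coefficients are unique because the system is unitriangular in `p`.
-/

open Finset OrderDual
open scoped List

namespace StanleyShuffle

theorem des_le (w : List ℕ) : des w ≤ w.length - 1 :=
  (card_filter_le _ _).trans (by simp)

theorem des_singleton (a : ℕ) : des [a] = 0 := by simp [des, desSet]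

theorem des_cons_cons (a b : ℕ) (w : List ℕ) :
    des (a :: b :: w) = des (b :: w) + if b < a then 1 else 0 := by
  have hshift : desSet (a :: b :: w) =
      (if b < a then {1} else ∅) ∪ (desSet (b :: w)).map (addRightEmbedding 1) := by
    ext i
    simp only [desSet, mem_union, mem_filter, mem_Icc, mem_map, addRightEmbedding_apply]
    rcases i with _ | _ | i <;> split_ifs <;> simp_all
  rw [des, hshift, card_union_of_disjoint, card_map, ← des, add_comm]
  · split_ifs <;> simp
  · split_ifs <;> simp [desSet]

theorem des_zero_cons (w : List ℕ) : des (0 :: w) = des w := by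
  cases w with
  | nil => simp [des, desSet]
  | cons b w => simp [des_cons_cons]

/-- In `ℕᵒᵈ ×ₗ ℕ` larger values come first and equal values are ordered by their letters, so
a list of labels is sorted exactly when its values are compatible with its letters. -/
def label (v a : ℕ) : ℕᵒᵈ ×ₗ ℕ := toLex (toDual v, a)

def letter (z : ℕᵒᵈ ×ₗ ℕ) : ℕ := (ofLex z).2

@[simp] theorem letter_label (v a : ℕ) : letter (label v a) = a := rfl

theorem label_inj {v a u b : ℕ} : label v a = label u b ↔ v = u ∧ a = b := by
  simp [label]

theorem label_le_label {v a u b : ℕ} :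
    label v a ≤ label u b ↔ u < v ∨ u = v ∧ a ≤ b := by
  simp [label, Prod.Lex.toLex_le_toLex, eq_comm]

/-- Sorted labellings of `w` by labels `≥ label v c`, i.e. with values `≤ v` and the value `v`
only on letters `≥ c`: the bound behaves like a letter `c` with value `v` preceding `w`, which
makes the recursion work, and `labellings w p 0` is the set of labellings with values in
`{0, …, p}`. -/
def labellings : List ℕ → ℕ → ℕ → Finset (List (ℕᵒᵈ ×ₗ ℕ))
  | [], _, _ => {[]}
  | a :: w, v, c => {u ∈ range (v + 1) | label v c ≤ label u a}.biUnion
      fun u => (labellings w u a).image (label u a :: ·)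

theorem mem_labellings {w : List ℕ} {v c : ℕ} {ζ : List (ℕᵒᵈ ×ₗ ℕ)} :
    ζ ∈ labellings w v c ↔
      ζ.map letter = w ∧ ζ.Pairwise (· ≤ ·) ∧ ∀ z ∈ ζ, label v c ≤ z := by
  induction w generalizing ζ v c with
  | nil => cases ζ <;> simp [labellings]
  | cons a w ih =>
    cases ζ with
    | nil => simp [labellings]
    | cons z ζ =>
      obtain ⟨u, b, rfl⟩ : ∃ u b, z = label u b := ⟨_, _, rfl⟩
      simp only [labellings, mem_biUnion, mem_filter, mem_range, mem_image, ih, List.cons.injEq,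
        label_inj, List.map_cons, letter_label, List.pairwise_cons, List.forall_mem_cons]
      constructor
      · rintro ⟨u, ⟨-, hvu⟩, ζ, ⟨hw, hζ, hbound⟩, ⟨rfl, rfl⟩, rfl⟩
        exact ⟨⟨rfl, hw⟩, ⟨hbound, hζ⟩, hvu, fun y hy => hvu.trans (hbound y hy)⟩
      · rintro ⟨⟨rfl, hw⟩, ⟨hbound, hζ⟩, hvu, -⟩
        refine ⟨u, ⟨?_, hvu⟩, ζ, ⟨hw, hζ, hbound⟩, ⟨rfl, rfl⟩, rfl⟩
        rw [label_le_label] at hvu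
        omega

theorem sum_range_multichoose_sub {d ℓ : ℕ} (h : d ≤ ℓ) (n : ℕ) :
    ∑ j ∈ range n, Nat.multichoose (j + 1 - d) ℓ = Nat.multichoose (n - d) (ℓ + 1) := by
  induction n with
  | zero => simp [Nat.multichoose_zero_succ]
  | succ n ih =>
    rw [sum_range_succ, ih]
    rcases le_or_gt d n with hdn | hnd
    · rw [show n + 1 - d = n - d + 1 by omega, Nat.multichoose_succ_succ]
    · obtain ⟨ℓ, rfl⟩ : ∃ ℓ', ℓ = ℓ' + 1 := Nat.exists_eq_add_one.mpr (by omega)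
      simp [show n + 1 - d = 0 by omega, show n - d = 0 by omega, Nat.multichoose_zero_succ]

theorem card_labellings (w : List ℕ) (v c : ℕ) :
    #(labellings w v c) = Nat.multichoose (v + 1 - des (c :: w)) w.length := by
  induction w generalizing v c with
  | nil => simp [labellings, des_singleton, Nat.multichoose_zero_right]
  | cons a w ih =>
    have hfirst : {u ∈ range (v + 1) | label v c ≤ label u a} =
        range (if a < c then v else v + 1) := by
      ext u
      simp only [mem_filter, mem_range, label_le_label]
      split_ifs <;> omega
    have hdisj : Set.PairwiseDisjoint ↑{u ∈ range (v + 1) | label v c ≤ label u a}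
        fun u => (labellings w u a).image (label u a :: ·) := by
      intro u _ u' _ huu'
      simp only [Function.onFun, disjoint_left, mem_image]
      rintro _ ⟨ζ, -, rfl⟩ ⟨ζ', -, h⟩
      exact huu' (label_inj.mp (List.cons.inj h).1).1.symm
    have hdes : des (a :: w) ≤ w.length := by simpa using des_le (a :: w)
    rw [labellings, card_biUnion hdisj, hfirst]
    simp only [card_image_of_injective _ List.cons_injective, ih]
    rw [sum_range_multichoose_sub hdes, des_cons_cons, List.length_cons]
    split_ifs
    · rw [Nat.add_sub_add_right]
    · rfl

theorem card_labellings_zero (w : List ℕ) (p : ℕ) :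
    #(labellings w p 0) = (w.length + p - des w).choose w.length := by
  rw [card_labellings, des_zero_cons, Nat.multichoose_eq]
  rcases le_or_gt (des w) p with h | h
  · rw [show p + 1 - des w + w.length - 1 = w.length + p - des w by omega]
  · have := des_le w
    rw [Nat.choose_eq_zero_of_lt (by omega), Nat.choose_eq_zero_of_lt (by omega)]

theorem _root_.List.Sublist.filter_mem_eq_s14 {ι : Type*} [DecidableEq ι] {l₁ l₂ : List ι}
    (h : l₁ <+ l₂) (hl₂ : l₂.Nodup) : l₂.filter (· ∈ l₁) = l₁ := by
  have hsub : l₁ <+ l₂.filter (· ∈ l₁) := by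
    simpa [List.filter_eq_self.mpr fun x hx => decide_eq_true hx] using h.filter (· ∈ l₁)
  refine (hsub.eq_of_length_le ?_).symm
  exact ((hl₂.filter _).subperm fun x hx => by simpa using (List.mem_filter.mp hx).2).length_le

theorem filter_mem_labellings {α σ : List ℕ} {v c : ℕ} {ζ : List (ℕᵒᵈ ×ₗ ℕ)}
    (hζ : ζ ∈ labellings α v c) (hσ : σ <+ α) (hα : α.Nodup) :
    ζ.filter (letter · ∈ σ) ∈ labellings σ v c := by
  obtain ⟨hletters, hsorted, hbound⟩ := mem_labellings.mp hζ
  refine mem_labellings.mpr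
    ⟨?_, hsorted.filter _, fun z hz => hbound z (List.mem_of_mem_filter hz)⟩
  calc (ζ.filter (letter · ∈ σ)).map letter = (ζ.map letter).filter (· ∈ σ) := by
        rw [List.filter_map]; rfl
    _ = σ := by rw [hletters, hσ.filter_mem_eq_s14 hα]

theorem filter_eq_of_perm_append {σ π : List ℕ} (hdisj : σ.Disjoint π) {v c : ℕ}
    {ζ ξ η : List (ℕᵒᵈ ×ₗ ℕ)} (hζ : ζ.Pairwise (· ≤ ·)) (hperm : ζ ~ ξ ++ η)
    (hξ : ξ ∈ labellings σ v c) (hη : η ∈ labellings π v c) :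
    ζ.filter (letter · ∈ σ) = ξ := by
  obtain ⟨hξσ, hξsorted, -⟩ := mem_labellings.mp hξ
  have hξ_self : ξ.filter (letter · ∈ σ) = ξ := List.filter_eq_self.mpr fun z hz =>
    decide_eq_true (hξσ ▸ List.mem_map_of_mem hz)
  have hη_nil : η.filter (letter · ∈ σ) = [] := List.filter_eq_nil_iff.mpr fun z hz hσ =>
    hdisj (of_decide_eq_true hσ) ((mem_labellings.mp hη).1 ▸ List.mem_map_of_mem hz)
  refine List.Perm.eq_of_pairwise' (hζ.filter _) hξsorted ?_
  simpa [List.filter_append, hξ_self, hη_nil] using hperm.filter (letter · ∈ σ)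

theorem filter_append_filter_perm {σ π α : List ℕ} (hdisj : σ.Disjoint π)
    (hα : α ~ σ ++ π) {ζ : List (ℕᵒᵈ ×ₗ ℕ)} (hζ : ζ.map letter = α) :
    ζ.filter (letter · ∈ σ) ++ ζ.filter (letter · ∈ π) ~ ζ := by
  have hcompl : ζ.filter (letter · ∈ π) = ζ.filter (fun z => !decide (letter z ∈ σ)) := by
    refine List.filter_congr fun z hz => ?_
    have hz : letter z ∈ σ ++ π := hα.subset (hζ ▸ List.mem_map_of_mem hz)
    by_cases hzσ : letter z ∈ σ
    · simpa [hzσ] using hdisj hzσ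
    · simpa [hzσ] using hz
  simpa only [hcompl] using List.filter_append_perm _ ζ

theorem isShuffle_mergeSort_append {σ π : List ℕ} (hσπ : (σ ++ π).Nodup) {v c : ℕ}
    {ξ η : List (ℕᵒᵈ ×ₗ ℕ)} (hξ : ξ ∈ labellings σ v c)
    (hη : η ∈ labellings π v c) :
    IsShuffle σ π (((ξ ++ η).mergeSort (· ≤ ·)).map letter) := by
  obtain ⟨hξσ, hξsorted, -⟩ := mem_labellings.mp hξ
  obtain ⟨hηπ, hηsorted, -⟩ := mem_labellings.mp hη
  have hperm := List.mergeSort_perm (ξ ++ η) (· ≤ ·)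
  have hsorted := (List.sortedLE_mergeSort (l := ξ ++ η)).pairwise
  have hletters : ((ξ ++ η).mergeSort (· ≤ ·)).map letter ~ σ ++ π := by
    simpa [hξσ, hηπ] using hperm.map letter
  have hsub {τ : List (ℕᵒᵈ ×ₗ ℕ)} (hτ : τ.Pairwise (· ≤ ·)) (h : τ <+ ξ ++ η) :
      τ <+ (ξ ++ η).mergeSort (· ≤ ·) :=
    List.sublist_of_subperm_of_pairwise (h.subperm.trans hperm.symm.subperm) hτ hsorted
  exact ⟨hletters.nodup_iff.mpr hσπ,
    hξσ ▸ (hsub hξsorted (List.sublist_append_left ξ η)).map letter,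
    hηπ ▸ (hsub hηsorted (List.sublist_append_right ξ η)).map letter, by simp [hletters.length_eq]⟩

theorem mergeSort_append_mem_labellings {v c : ℕ} {ξ η : List (ℕᵒᵈ ×ₗ ℕ)}
    {σ π : List ℕ} (hξ : ξ ∈ labellings σ v c) (hη : η ∈ labellings π v c) :
    (ξ ++ η).mergeSort (· ≤ ·) ∈
      labellings (((ξ ++ η).mergeSort (· ≤ ·)).map letter) v c := by
  refine mem_labellings.mpr ⟨rfl, (List.sortedLE_mergeSort).pairwise, fun z hz => ?_⟩
  rcases List.mem_append.mp ((List.mergeSort_perm _ _).subset hz) with hz | hz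
  exacts [(mem_labellings.mp hξ).2.2 z hz, (mem_labellings.mp hη).2.2 z hz]

open Classical in
noncomputable def shuffles (σ π : List ℕ) : Finset (List ℕ) :=
  {α ∈ (σ ++ π).permutations.toFinset | IsShuffle σ π α}

theorem _root_.IsShuffle.perm {σ π α : List ℕ} (h : IsShuffle σ π α)
    (hσπ : (σ ++ π).Nodup) : α ~ σ ++ π := by
  obtain ⟨-, hσ, hπ, hlen⟩ := h
  refine ((hσπ.subperm fun x hx => ?_).perm_of_length_le (by simp [hlen])).symm
  rcases List.mem_append.mp hx with hx | hx
  exacts [hσ.subset hx, hπ.subset hx]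

theorem mem_shuffles {σ π α : List ℕ} (hσπ : (σ ++ π).Nodup) :
    α ∈ shuffles σ π ↔ IsShuffle σ π α := by
  simpa [shuffles] using fun h => h.perm hσπ

theorem sum_card_labellings_shuffles {σ π : List ℕ} (hσ : σ.Nodup) (hπ : π.Nodup)
    (hdisj : σ.Disjoint π) (v c : ℕ) :
    ∑ α ∈ shuffles σ π, #(labellings α v c) =
      #(labellings σ v c) * #(labellings π v c) := by
  have hσπ := hσ.append hπ hdisj
  have hfibres : Set.PairwiseDisjoint ↑(shuffles σ π) (labellings · v c) := by
    intro α _ β _ hαβ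
    refine disjoint_left.mpr fun ζ hα hβ => hαβ ?_
    rw [← (mem_labellings.mp hα).1, (mem_labellings.mp hβ).1]
  rw [← card_biUnion hfibres, ← card_product]
  refine card_nbij' (fun ζ => (ζ.filter (letter · ∈ σ), ζ.filter (letter · ∈ π)))
    (fun ξη => (ξη.1 ++ ξη.2).mergeSort (· ≤ ·)) ?_ ?_ ?_ ?_
  · intro ζ hζ
    obtain ⟨α, hα, hζ⟩ := mem_biUnion.mp hζ
    obtain ⟨hnodup, hσα, hπα, -⟩ := (mem_shuffles hσπ).mp hα
    exact mem_product.mpr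
      ⟨filter_mem_labellings hζ hσα hnodup, filter_mem_labellings hζ hπα hnodup⟩
  · rintro ⟨ξ, η⟩ hξη
    obtain ⟨hξ, hη⟩ := mem_product.mp hξη
    exact mem_biUnion.mpr ⟨_, (mem_shuffles hσπ).mpr (isShuffle_mergeSort_append hσπ hξ hη),
      mergeSort_append_mem_labellings hξ hη⟩
  · intro ζ hζ
    obtain ⟨α, hα, hζ⟩ := mem_biUnion.mp hζ
    obtain ⟨hletters, hsorted, -⟩ := mem_labellings.mp hζ
    exact List.Perm.eq_of_pairwise' List.sortedLE_mergeSort.pairwise hsorted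
      ((List.mergeSort_perm _ _).trans (filter_append_filter_perm hdisj
        (((mem_shuffles hσπ).mp hα).perm hσπ) hletters))
  · rintro ⟨ξ, η⟩ hξη
    obtain ⟨hξ, hη⟩ := mem_product.mp hξη
    have hperm := List.mergeSort_perm (ξ ++ η) (· ≤ ·)
    have hsorted := (List.sortedLE_mergeSort (l := ξ ++ η)).pairwise
    exact Prod.ext (filter_eq_of_perm_append hdisj hsorted hperm hξ hη)
      (filter_eq_of_perm_append hdisj.symm hsorted (hperm.trans List.perm_append_comm) hη hξ)

theorem sum_choose_des_shuffles {σ π : List ℕ} (hσ : σ.Nodup) (hπ : π.Nodup)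
    (hdisj : σ.Disjoint π) (p : ℕ) :
    ∑ α ∈ shuffles σ π, (σ.length + π.length + p - des α).choose (σ.length + π.length) =
      (σ.length + p - des σ).choose σ.length * (π.length + p - des π).choose π.length := by
  rw [← card_labellings_zero, ← card_labellings_zero,
    ← sum_card_labellings_shuffles hσ hπ hdisj]
  refine sum_congr rfl fun α hα => ?_
  obtain ⟨-, -, -, hlen⟩ := (mem_shuffles (hσ.append hπ hdisj)).mp hα
  rw [card_labellings_zero, hlen]

theorem chooseZ_of_neg {a : ℕ} {b : ℤ} (h : b < 0) : chooseZ a b = 0 := by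
  simp [chooseZ, not_le.mpr h]

@[simp] theorem chooseZ_natCast (a c : ℕ) : chooseZ a c = a.choose c := by
  simp [chooseZ]

theorem chooseZ_eq_zero_of_lt {a : ℕ} {b : ℤ} (h : (a : ℤ) < b) : chooseZ a b = 0 := by
  lift b to ℕ using by omega
  simpa using Nat.choose_eq_zero_of_lt (by omega)

@[simp] theorem chooseZ_zero_right (a : ℕ) : chooseZ a 0 = 1 := by
  simp [chooseZ]

theorem chooseZ_zero_left (b : ℤ) : chooseZ 0 b = if b = 0 then 1 else 0 := by
  rcases lt_trichotomy b 0 with h | rfl | h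
  · simp [chooseZ_of_neg h, h.ne]
  · simp [chooseZ]
  · simp [chooseZ_eq_zero_of_lt (a := 0) h, h.ne']

theorem chooseZ_succ_left (a : ℕ) (b : ℤ) :
    chooseZ (a + 1) b = chooseZ a b + chooseZ a (b - 1) := by
  rcases lt_trichotomy b 0 with h | rfl | h
  · simp [chooseZ_of_neg h, chooseZ_of_neg (show b - 1 < 0 by omega)]
  · simp [chooseZ]
  · lift b to ℕ using h.le
    obtain ⟨c, rfl⟩ := Nat.exists_eq_add_one.mpr (show 0 < b by omega)
    rw [chooseZ_natCast, show ((c + 1 : ℕ) : ℤ) - 1 = c by push_cast; ring, chooseZ_natCast,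
      chooseZ_natCast, Nat.choose_succ_succ', add_comm]

def tripleTerm (x y a b j : ℕ) : ℕ :=
  (x + y + j).choose j * chooseZ x ((a : ℤ) - j) * chooseZ y ((b : ℤ) - j)

def tripleSum (x y a b : ℕ) : ℕ :=
  ∑ j ∈ range (a + 1), tripleTerm x y a b j

theorem tripleTerm_succ (x y a b j : ℕ) :
    tripleTerm x (y + 1) (a + 1) (b + 1) (j + 1) = tripleTerm x y (a + 1) (b + 1) (j + 1) +
      tripleTerm x y (a + 1) b (j + 1) + tripleTerm x (y + 1) a b j := by
  simp only [tripleTerm, Nat.cast_add_one, add_sub_add_right_eq_sub]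
  rw [show x + (y + 1) + (j + 1) = x + y + (j + 1) + 1 by omega, Nat.choose_succ_succ',
    chooseZ_succ_left, show x + y + (j + 1) = x + (y + 1) + j by omega,
    show (b : ℤ) - j - 1 = b - (j + 1) by ring]
  ring

theorem tripleTerm_succ_zero (x y a b : ℕ) :
    tripleTerm x (y + 1) a (b + 1) 0 = tripleTerm x y a (b + 1) 0 + tripleTerm x y a b 0 := by
  simp only [tripleTerm, Nat.cast_add_one, chooseZ_succ_left y]
  simp [mul_add]

theorem tripleSum_succ_succ_succ (x y a b : ℕ) :
    tripleSum x (y + 1) (a + 1) (b + 1) =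
      tripleSum x y (a + 1) (b + 1) + tripleSum x y (a + 1) b + tripleSum x (y + 1) a b := by
  simp only [tripleSum, sum_range_succ' _ (a + 1), tripleTerm_succ, sum_add_distrib,
    tripleTerm_succ_zero]
  ring

theorem tripleSum_y_zero (x a b : ℕ) :
    tripleSum x 0 a b = (x + b).choose a * (0 + a).choose b := by
  rw [zero_add]
  rcases le_or_gt b a with hba | hab
  · rw [tripleSum, sum_eq_single_of_mem b (mem_range.mpr (by omega))]
    · rw [tripleTerm, sub_self, chooseZ_zero_right, mul_one, ← Nat.cast_sub hba, chooseZ_natCast,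
        Nat.choose_mul hba, add_zero, Nat.add_sub_cancel]
    · intro j _ hjb
      rw [tripleTerm, chooseZ_zero_left, if_neg (by omega), mul_zero]
  · rw [Nat.choose_eq_zero_of_lt hab, mul_zero, tripleSum]
    refine sum_eq_zero fun j hj => ?_
    rw [tripleTerm, chooseZ_zero_left, if_neg (by simp at hj; omega), mul_zero]

theorem tripleSum_a_zero (x y b : ℕ) :
    tripleSum x y 0 b = (x + b).choose 0 * (y + 0).choose b := by
  simp [tripleSum, tripleTerm]

theorem tripleSum_b_zero (x y a : ℕ) :
    tripleSum x y a 0 = (x + 0).choose a * (y + a).choose 0 := by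
  rw [tripleSum, sum_eq_single_of_mem 0 (mem_range.mpr (by omega))]
  · simp [tripleTerm]
  · intro j _ hj
    rw [tripleTerm, chooseZ_of_neg (b := ((0 : ℕ) : ℤ) - j) (by omega), mul_zero]

theorem tripleSum_eq (x y a b : ℕ) : tripleSum x y a b = (x + b).choose a * (y + a).choose b := by
  induction y generalizing a b with
  | zero => exact tripleSum_y_zero x a b
  | succ y ihy =>
    induction a generalizing b with
    | zero => exact tripleSum_a_zero x (y + 1) b
    | succ a iha =>
      cases b with
      | zero => exact tripleSum_b_zero x (y + 1) (a + 1)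
      | succ b =>
        rw [tripleSum_succ_succ_succ, ihy, ihy, iha, show x + (b + 1) = x + b + 1 by omega,
          show y + 1 + (a + 1) = y + (a + 1) + 1 by omega, Nat.choose_succ_succ',
          Nat.choose_succ_succ' (y + (a + 1)), show y + 1 + a = y + (a + 1) by omega]
        ring

theorem tripleSum_eq_sum_range {m n r s p : ℕ} (hr : r ≤ m) (hs : s ≤ n) (hrp : r ≤ p)
    (hsp : s ≤ p) :
    tripleSum (m - r + s) (n - s + r) (p - r) (p - s) =
      ∑ k ∈ range (p + 1), chooseZ (m - r + s) (k - r) * chooseZ (n - s + r) (k - s) *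
        (m + n + p - k).choose (m + n) := by
  have hreflect : ∀ j ∈ range (p + 1),
      tripleTerm (m - r + s) (n - s + r) (p - r) (p - s) j =
        chooseZ (m - r + s) ((p - j : ℕ) - r) * chooseZ (n - s + r) ((p - j : ℕ) - s)
          * (m + n + p - (p - j)).choose (m + n) := by
    intro j hj
    rw [mem_range] at hj
    rw [tripleTerm, show m - r + s + (n - s + r) + j = m + n + j by omega,
      show m + n + p - (p - j) = m + n + j by omega, Nat.choose_symm_add,
      show ((p - j : ℕ) : ℤ) - r = (p - r : ℕ) - j by omega,
      show ((p - j : ℕ) : ℤ) - s = (p - s : ℕ) - j by omega]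
    ring
  rw [tripleSum, sum_subset (range_subset_range.mpr (by omega : p - r + 1 ≤ p + 1)),
    sum_congr rfl hreflect]
  · exact sum_range_reflect (δ := ℕ) (fun k => chooseZ (m - r + s) ((k : ℤ) - r) *
      chooseZ (n - s + r) ((k : ℤ) - s) * (m + n + p - k).choose (m + n)) (p + 1)
  · intro j _ hj
    rw [tripleTerm, chooseZ_of_neg (b := ((p - r : ℕ) : ℤ) - j) (by simp at hj; omega),
      mul_zero, zero_mul]

theorem choose_mul_choose_eq_sum {m n r s : ℕ} (hr : r ≤ m) (hs : s ≤ n) (p : ℕ) :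
    (m + p - r).choose m * (n + p - s).choose n =
      ∑ k ∈ range (p + 1), chooseZ (m - r + s) (k - r) * chooseZ (n - s + r) (k - s) *
        (m + n + p - k).choose (m + n) := by
  by_cases hp : r ≤ p ∧ s ≤ p
  · obtain ⟨hrp, hsp⟩ := hp
    rw [← tripleSum_eq_sum_range hr hs hrp hsp, tripleSum_eq,
      show m - r + s + (p - s) = m + p - r by omega, show n - s + r + (p - r) = n + p - s by omega,
      ← Nat.choose_symm_of_eq_add (show m + p - r = p - r + m by omega),
      ← Nat.choose_symm_of_eq_add (show n + p - s = p - s + n by omega)]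
  · rw [sum_eq_zero]
    · rcases not_and_or.mp hp with hp | hp
      · rw [Nat.choose_eq_zero_of_lt (show m + p - r < m by omega), zero_mul]
      · rw [Nat.choose_eq_zero_of_lt (show n + p - s < n by omega), mul_zero]
    · intro k hk
      rw [mem_range] at hk
      rcases not_and_or.mp hp with hp | hp
      · simp [chooseZ_of_neg (show (k : ℤ) - r < 0 by omega)]
      · simp [chooseZ_of_neg (show (k : ℤ) - s < 0 by omega)]

theorem eq_of_sum_range_mul_choose_eq {N : ℕ} {f g : ℕ → ℕ}
    (h : ∀ p, ∑ k ∈ range (p + 1), f k * (N + p - k).choose N =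
      ∑ k ∈ range (p + 1), g k * (N + p - k).choose N) : f = g := by
  funext k
  induction k using Nat.strong_induction_on with
  | _ k ih =>
    have hk := h k
    rw [sum_range_succ, sum_range_succ, sum_congr rfl fun j hj => by rw [ih j (mem_range.mp hj)],
      Nat.add_sub_cancel, Nat.choose_self, mul_one, mul_one] at hk
    exact Nat.add_left_cancel hk

theorem sum_choose_eq_sum_card_fiber {ι : Type*} (S : Finset ι) (d : ι → ℕ) {N : ℕ}
    (hd : ∀ i ∈ S, d i ≤ N) (p : ℕ) :
    ∑ i ∈ S, (N + p - d i).choose N =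
      ∑ k ∈ range (p + 1), #{i ∈ S | d i = k} * (N + p - k).choose N := by
  simp_rw [← smul_eq_mul, ← sum_const, sum_fiberwise_eq_sum_filter']
  refine (sum_filter_of_ne fun i hi hne => ?_).symm
  by_contra hp
  exact hne (Nat.choose_eq_zero_of_lt (by have := hd i hi; simp at hp; omega))

end StanleyShuffle

/-- Stanley's Shuffle Theorem at `q = 1`: counting shuffles with `k` descents. -/
theorem stanley_q1 (m n r s k : ℕ) (σ π : List ℕ) (hσ : σ.Nodup) (hπ : π.Nodup)
    (hdisj : σ.Disjoint π) (hm : σ.length = m) (hn : π.length = n)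
    (hr : des σ = r) (hs : des π = s) :
    {α : List ℕ | IsShuffle σ π α ∧ des α = k}.ncard
      = chooseZ (m - r + s) ((k : ℤ) - r) * chooseZ (n - s + r) ((k : ℤ) - s) := by
  open StanleyShuffle in
  subst hm hn hr hs
  have hσπ := hσ.append hπ hdisj
  have hset : {α | IsShuffle σ π α ∧ des α = k} =
      ↑{α ∈ shuffles σ π | des α = k} := by
    ext α
    simp [mem_shuffles hσπ]
  have hdes : ∀ α ∈ shuffles σ π, des α ≤ σ.length + π.length := fun α hα => by
    have := des_le α
    rw [((mem_shuffles hσπ).mp hα).2.2.2] at this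
    omega
  rw [hset, Set.ncard_coe_finset]
  refine congrFun (eq_of_sum_range_mul_choose_eq (N := σ.length + π.length)
    (f := fun j => #{α ∈ shuffles σ π | des α = j})
    (g := fun j => chooseZ (σ.length - des σ + des π) (j - des σ) *
      chooseZ (π.length - des π + des σ) (j - des π)) fun p => ?_) k
  rw [← sum_choose_eq_sum_card_fiber _ _ hdes, sum_choose_des_shuffles hσ hπ hdisj,
    choose_mul_choose_eq_sum ((des_le σ).trans (Nat.sub_le _ _))
      ((des_le π).trans (Nat.sub_le _ _))]
end

section
/- Let [π] be a cyclic permutation of length n. Then Σ over all letters i of [π] of x^{des(S_i([π]))} = (n − s)·x^s + s·x^{s−1}, where s = cdes([π]) and S_i([π]) is the rotation of [π] starting with letter i. -/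
open Polynomial

open Finset Function

/-! Reading a cyclic permutation of length `n` from each of its letters gives its `n` rotations.
The descents of the rotation starting at position `j` are the cyclic descents of `[π]` except
the wrap-around pair (position `j - 1`, position `j`). Hence `des = s - 1` for the `s` rotations
whose wrap-around pair is a cyclic descent and `des = s` for the other `n - s`. -/

section Count

variable {p : ℕ → Prop} [DecidablePred p] {n : ℕ}

theorem Nat.card_filter_Icc_one_eq_card_filter_range (m : ℕ) :
    #{i ∈ Icc 1 m | p i} = #{k ∈ range m | p (k + 1)} := by
  have hIcc : Icc 1 m = (range m).map (addRightEmbedding 1) := by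
    rw [range_eq_Ico, map_add_right_Ico, zero_add, Ico_add_one_right_eq_Icc]
  rw [hIcc, filter_map, card_map]
  rfl

theorem Function.Periodic.count_comp_add (hp : Periodic p n) (j : ℕ) :
    n.count (fun k => p (j + k)) = n.count p := by
  -- split `count p (j + n)` after `j` and after `n`; by periodicity the two tails swap roles
  have h₁ := Nat.count_add (p := p) j n
  have h₂ := Nat.count_add (p := p) n j
  have hp' : ∀ k, p (k + n) = p k := hp
  simp only [add_comm n, hp'] at h₂
  change _ = _ + Nat.count p j at h₂
  omega

theorem Function.Periodic.count_comp_add_add_ite (hp : Periodic p n) (hn : 0 < n) (j : ℕ) :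
    (n - 1).count (fun k => p (j + k)) + (if p (n - 1 + j) then 1 else 0) = n.count p := by
  have h := Nat.count_succ (p := fun k => p (j + k)) (n - 1)
  rw [Nat.sub_add_cancel hn, hp.count_comp_add, add_comm j] at h
  exact h.symm

end Count

theorem List.Nodup.sum_toFinset_idxOf {α M : Type*} [DecidableEq α] [AddCommMonoid M]
    {l : List α} (hl : l.Nodup) (f : ℕ → M) :
    ∑ a ∈ l.toFinset, f (l.idxOf a) = ∑ j ∈ Finset.range l.length, f j := by
  refine sum_nbij (l.idxOf ·) (fun a ha => ?_) (fun a ha b _ hab => ?_) (fun k hk => ?_)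
    (fun _ _ => rfl)
  · simpa using List.idxOf_lt_length_iff.2 (List.mem_toFinset.1 ha)
  · exact (List.idxOf_inj (List.mem_toFinset.1 ha)).1 hab
  · have hk : k < l.length := by simpa using hk
    exact ⟨l[k], by simp, hl.idxOf_getElem k hk⟩

theorem Finset.sum_range_pow_eq_of_add_ite_eq {R : Type*} [CommSemiring R] (x : R)
    {n s : ℕ} {d : ℕ → ℕ} {q : ℕ → Prop} [DecidablePred q] (hq : n.count q = s)
    (hd : ∀ j < n, d j + (if q j then 1 else 0) = s) :
    ∑ j ∈ range n, x ^ d j = ((n - s : ℕ) : R) * x ^ s + (s : R) * x ^ (s - 1) := by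
  have hterm : ∀ j ∈ range n, x ^ d j = if q j then x ^ (s - 1) else x ^ s := by
    intro j hj
    have h := hd j (mem_range.1 hj)
    split_ifs at h ⊢ <;> rw [← h] <;> simp
  have hcard : #{j ∈ range n | q j} = s := by rw [← Nat.count_eq_card_filter_range, hq]
  have hcard_not : #{j ∈ range n | ¬q j} = n - s := by
    have := card_filter_add_card_filter_not (s := range n) q
    rw [card_range, hcard] at this
    omega
  rw [sum_congr rfl hterm, sum_ite, sum_const, sum_const, hcard, hcard_not, nsmul_eq_mul,
    nsmul_eq_mul, add_comm]

/-- `l` has a cyclic descent from the 0-based position `k` to `k + 1`, positions taken modulo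
`l.length`. -/
def IsCyclicDescent (l : List ℕ) (k : ℕ) : Prop :=
  l.getD ((k + 1) % l.length) 0 < l.getD (k % l.length) 0

instance (l : List ℕ) : DecidablePred (IsCyclicDescent l) := fun _ => Nat.decLt _ _

theorem isCyclicDescent_periodic (l : List ℕ) : Periodic (IsCyclicDescent l) l.length := by
  intro k
  simp only [IsCyclicDescent, add_right_comm k l.length 1, Nat.add_mod_right]

theorem cdes_eq_count (l : List ℕ) : cdes l = l.length.count (IsCyclicDescent l) := by
  rw [cdes, cdesSet, Nat.card_filter_Icc_one_eq_card_filter_range, Nat.count_eq_card_filter_range]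
  congr 1
  refine filter_congr fun k hk => ?_
  rw [IsCyclicDescent, Nat.mod_eq_of_lt (mem_range.1 hk), Nat.add_sub_cancel]

theorem List.getD_rotate {α : Type*} {l : List α} {k : ℕ} (j : ℕ) (d : α) (hk : k < l.length) :
    (l.rotate j).getD k d = l.getD ((k + j) % l.length) d := by
  simp only [List.getD_eq_getElem?_getD, List.getElem?_rotate hk]

theorem des_rotate_eq_count (l : List ℕ) (j : ℕ) :
    des (l.rotate j) = (l.length - 1).count (fun k => IsCyclicDescent l (j + k)) := by
  rw [des, desSet, List.length_rotate, Nat.card_filter_Icc_one_eq_card_filter_range,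
    Nat.count_eq_card_filter_range]
  congr 1
  refine filter_congr fun k hk => ?_
  have hk : k < l.length - 1 := mem_range.1 hk
  rw [List.getD_rotate j 0 (by omega), List.getD_rotate j 0 (by omega), Nat.add_sub_cancel,
    IsCyclicDescent, add_right_comm, add_comm k j]

theorem des_rotate_add_ite (l : List ℕ) (hl : l ≠ []) (j : ℕ) :
    des (l.rotate j) + (if IsCyclicDescent l (l.length - 1 + j) then 1 else 0) = cdes l := by
  rw [des_rotate_eq_count, cdes_eq_count,
    (isCyclicDescent_periodic l).count_comp_add_add_ite (List.length_pos_iff.2 hl)]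

theorem sum_des_rotations_general (n s : ℕ) (l : List ℕ) (hl : l.Nodup)
    (hn : l.length = n) (hs : cdes l = s) :
    ∑ i ∈ l.toFinset, (X : Polynomial ℤ) ^ des (startAt l i)
      = ((n - s : ℕ) : Polynomial ℤ) * X ^ s + (s : Polynomial ℤ) * X ^ (s - 1) := by
  subst hn hs
  calc ∑ i ∈ l.toFinset, (X : Polynomial ℤ) ^ des (startAt l i)
      = ∑ j ∈ range l.length, X ^ des (l.rotate j) :=
        hl.sum_toFinset_idxOf fun j => X ^ des (l.rotate j)
    _ = _ := by
      refine sum_range_pow_eq_of_add_ite_eq X (d := fun j => des (l.rotate j))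
        (q := fun j => IsCyclicDescent l (l.length - 1 + j)) ?_ fun j hj => ?_
      · rw [cdes_eq_count, (isCyclicDescent_periodic l).count_comp_add]
      · exact des_rotate_add_ite l (List.ne_nil_of_length_pos (by omega)) j

/-- The generating function of descent numbers over all rotations of a cyclic
permutation: `∑_i x^{des(S_i([π]))} = (n-s) x^s + s x^{s-1}`. -/
theorem sum_des_rotations (n s : ℕ) (l : List ℕ) (hl : l.Nodup) (h0 : l ≠ [])
    (hn : l.length = n) (hs : cdes l = s) :
    ∑ i ∈ l.toFinset, (X : Polynomial ℤ) ^ des (startAt l i)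
      = ((n - s : ℕ) : Polynomial ℤ) * X ^ s + (s : Polynomial ℤ) * X ^ (s - 1) :=
  sum_des_rotations_general n s l hl hn hs
end
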